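/- arXiv:1601.03858 — 3 statements merged into one kernel-verified Lean document; each statement's English description precedes it below -/
import Mathlib

section
/- Let X be a real random variable on a probability space, g : ℝ → ℝ continuously differentiable, and p, c ∈ ℝ. Assume E[|g(X)| e^{pX}] < ∞ and that z ↦ e^{pz} (g'(z) + p g(z)) P(X ≥ z) is integrable on [c, ∞). Then E[ g(X) e^{pX} ] = E[ g(X ∧ c) e^{p (X ∧ c)} ] + ∫_c^∞ e^{pz} ( g'(z) + p g(z) ) P(X ≥ z) dz, where X ∧ c denotes the minimum of X and c. -/
open MeasureTheory Set

/-! With `h z = g z * exp (p * z)` we have `h' z = exp (p * z) * (g' z + p * g z)`, and the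
fundamental theorem of calculus gives, for every real `x`,
`h x - h (min x c) = ∫_{[c, ∞)} 1{z ≤ x} h' z dz`.
Taking expectations at `x = X` and exchanging the two integrals by Fubini, which the
integrability of `h' z * P(X ≥ z)` on `[c, ∞)` justifies, turns the right-hand side into
`∫_{[c, ∞)} h' z * P(X ≥ z) dz`. -/

theorem sub_apply_min_eq_setIntegral_indicator_Iic {h h' : ℝ → ℝ}
    (hderiv : ∀ z, HasDerivAt h (h' z) z) (hcont : Continuous h') (x c : ℝ) :
    h x - h (min x c) = ∫ z in Ici c, (Iic x).indicator h' z := by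
  rw [integral_indicator measurableSet_Iic, Measure.restrict_restrict measurableSet_Iic,
    inter_comm, Ici_inter_Iic, integral_Icc_eq_integral_Ioc]
  rcases le_or_gt c x with hcx | hxc
  · rw [min_eq_right hcx, ← intervalIntegral.integral_of_le hcx,
      intervalIntegral.integral_eq_sub_of_hasDerivAt (fun z _ => hderiv z)
        (hcont.intervalIntegrable c x)]
  · simp [min_eq_left hxc.le, Ioc_eq_empty_of_le hxc.le]

theorem indicator_Iic_comp_eq_indicator_setOf_le {Ω : Type*} (X : Ω → ℝ) (f : ℝ → ℝ)
    (z : ℝ) :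
    (fun ω => (Iic (X ω)).indicator f z) = {ω | z ≤ X ω}.indicator (fun _ => f z) := by
  ext ω
  by_cases hz : z ≤ X ω <;> simp [hz]

section

variable {Ω : Type*} [MeasurableSpace Ω] {P : Measure Ω} {X : Ω → ℝ}

theorem integral_indicator_Iic_apply_eq_mul_measureReal (hX : Measurable X) (f : ℝ → ℝ)
    (z : ℝ) :
    ∫ ω, (Iic (X ω)).indicator f z ∂P = f z * P.real {ω | z ≤ X ω} := by
  rw [indicator_Iic_comp_eq_indicator_setOf_le,
    integral_indicator_const _ (measurableSet_le measurable_const hX), smul_eq_mul, mul_comm]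

variable [IsFiniteMeasure P]

theorem integrable_indicator_Iic_prod {μ : Measure ℝ} [SFinite μ] (hX : Measurable X)
    {f : ℝ → ℝ} (hf : Measurable f)
    (hint : Integrable (fun z => f z * P.real {ω | z ≤ X ω}) μ) :
    Integrable (fun q : ℝ × Ω => (Iic (X q.2)).indicator f q.1) (μ.prod P) := by
  have hmeas : Measurable (fun q : ℝ × Ω => (Iic (X q.2)).indicator f q.1) := by
    have : (fun q : ℝ × Ω => (Iic (X q.2)).indicator f q.1) =
        {q : ℝ × Ω | q.1 ≤ X q.2}.indicator (fun q => f q.1) := by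
      ext q
      by_cases hq : q.1 ≤ X q.2 <;> simp [hq]
    rw [this]
    exact (hf.comp measurable_fst).indicator
      (measurableSet_le measurable_fst (hX.comp measurable_snd))
  refine (integrable_prod_iff hmeas.aestronglyMeasurable).2 ⟨ae_of_all _ fun z => ?_, ?_⟩
  · simp only [indicator_Iic_comp_eq_indicator_setOf_le]
    exact (integrable_const (f z)).indicator (measurableSet_le measurable_const hX)
  · refine hint.norm.congr (ae_of_all _ fun z => ?_)
    simp only [norm_indicator_eq_indicator_norm,
      integral_indicator_Iic_apply_eq_mul_measureReal hX, norm_mul,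
      Real.norm_of_nonneg measureReal_nonneg]

theorem integral_integral_indicator_Iic_swap {μ : Measure ℝ} [SFinite μ] (hX : Measurable X)
    {f : ℝ → ℝ} (hf : Measurable f)
    (hint : Integrable (fun z => f z * P.real {ω | z ≤ X ω}) μ) :
    ∫ ω, ∫ z, (Iic (X ω)).indicator f z ∂μ ∂P =
      ∫ z, f z * P.real {ω | z ≤ X ω} ∂μ := by
  rw [← integral_integral_swap (integrable_indicator_Iic_prod hX hf hint)]
  simp only [integral_indicator_Iic_apply_eq_mul_measureReal hX]

theorem MeasureTheory.Integrable.comp_min_const {h : ℝ → ℝ} (hh : Continuous h)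
    (hX : Measurable X) (hint : Integrable (fun ω => h (X ω)) P) (c : ℝ) :
    Integrable (fun ω => h (min (X ω) c)) P := by
  refine (hint.norm.add (integrable_const ‖h c‖)).mono'
    (hh.measurable.comp (hX.min measurable_const)).aestronglyMeasurable (ae_of_all _ fun ω => ?_)
  rcases min_choice (X ω) c with hmin | hmin <;> rw [hmin]
  · exact le_add_of_nonneg_right (norm_nonneg _)
  · exact le_add_of_nonneg_left (norm_nonneg _)

theorem integral_comp_eq_integral_comp_min_add_setIntegral {h h' : ℝ → ℝ}
    (hderiv : ∀ z, HasDerivAt h (h' z) z) (hcont : Continuous h') (hX : Measurable X)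
    (hint : Integrable (fun ω => h (X ω)) P) (c : ℝ)
    (hint' : IntegrableOn (fun z => h' z * P.real {ω | z ≤ X ω}) (Ici c)) :
    ∫ ω, h (X ω) ∂P =
      ∫ ω, h (min (X ω) c) ∂P + ∫ z in Ici c, h' z * P.real {ω | z ≤ X ω} := by
  have hh : Continuous h := continuous_iff_continuousAt.2 fun z => (hderiv z).continuousAt
  rw [← integral_integral_indicator_Iic_swap hX hcont.measurable hint', ← sub_eq_iff_eq_add',
    ← integral_sub hint (hint.comp_min_const hh hX c)]
  simp only [sub_apply_min_eq_setIntegral_indicator_Iic hderiv hcont]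

end

theorem hasDerivAt_mul_exp_const_mul {g : ℝ → ℝ} (p z : ℝ) (hg : DifferentiableAt ℝ g z) :
    HasDerivAt (fun z => g z * Real.exp (p * z))
      (Real.exp (p * z) * (deriv g z + p * g z)) z := by
  have hexp : HasDerivAt (fun z => Real.exp (p * z)) (Real.exp (p * z) * p) z := by
    simpa using ((hasDerivAt_id z).const_mul p).exp
  exact (hg.hasDerivAt.mul hexp).congr_deriv (by ring)

/-- Representation of `E[g(X)e^{pX}]` in terms of the truncated expectation and the
complementary cumulative distribution function:
`E[g(X)e^{pX}] = E[g(X∧c)e^{p(X∧c)}] + ∫_c^∞ e^{pz}(g'(z)+pg(z)) P(X ≥ z) dz`. -/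
theorem stmt13
    {Ω : Type*} [MeasurableSpace Ω] (P : Measure Ω) [IsProbabilityMeasure P]
    (X : Ω → ℝ) (hX : Measurable X)
    (g : ℝ → ℝ) (hg : ContDiff ℝ 1 g) (p c : ℝ)
    (hint : Integrable (fun ω => g (X ω) * Real.exp (p * X ω)) P)
    (hint' : IntegrableOn
      (fun z => Real.exp (p * z) * (deriv g z + p * g z) * (P {ω | z ≤ X ω}).toReal)
      (Set.Ici c)) :
    ∫ ω, g (X ω) * Real.exp (p * X ω) ∂P =
      (∫ ω, g (min (X ω) c) * Real.exp (p * min (X ω) c) ∂P) +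
        ∫ z in Set.Ici c,
          Real.exp (p * z) * (deriv g z + p * g z) * (P {ω | z ≤ X ω}).toReal :=
  integral_comp_eq_integral_comp_min_add_setIntegral
    (fun z => hasDerivAt_mul_exp_const_mul p z (hg.differentiable one_ne_zero z))
    ((Real.continuous_exp.comp (continuous_const_mul p)).mul
      ((hg.continuous_deriv le_rfl).add (hg.continuous.const_mul p))) hX hint c hint'
end

section
/- Let M > 0, b > 0, 0 ≤ β < 1, C > 0, and let B : [0,∞) → ℝ be continuous and bounded on [0,M]. Suppose y ↦ B(y)/y is monotonically increasing on [M,∞) with lim_{y→∞} B(y)/y = −b, and that B̄(y) := B(y) + b y satisfies |B̄(y)| ≤ C y^β for all y ≥ M. Then, with m := max(0, sup_{0 ≤ y ≤ M} (B(y) + b y)), there exists c > 0 such that for every Z ≥ M and every y ≥ 0: −c Z^β + (B(Z)/Z) y ≤ B(y) ≤ m − b y. -/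
open Filter Set

/-- If `B(y)/y` is monotonically increasing on `[M,∞)` with limit `−b` and
`|B̄(y)| = |B(y)+by| ≤ C y^β` for `y ≥ M`, then with `m := max(0, sup_{0≤y≤M}(B(y)+by))`
there exists `c > 0` such that for every `Z ≥ M` and every `y ≥ 0`,
`−c Z^β + (B(Z)/Z) y ≤ B(y) ≤ m − b y`. -/
theorem stmt17
    (M b β C : ℝ) (hM : 0 < M) (hb : 0 < b) (hβ0 : 0 ≤ β) (hβ1 : β < 1) (hC : 0 < C)
    (B : ℝ → ℝ) (hBcont : ContinuousOn B (Set.Ici 0))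
    (hBbdd : ∃ K : ℝ, ∀ y ∈ Set.Icc (0:ℝ) M, |B y| ≤ K)
    (hmono : MonotoneOn (fun y => B y / y) (Set.Ici M))
    (hlim : Tendsto (fun y => B y / y) atTop (nhds (-b)))
    (hBbar : ∀ y ≥ M, |B y + b * y| ≤ C * y ^ β) :
    ∃ c > (0:ℝ), ∀ Z ≥ M, ∀ y ≥ (0:ℝ),
      -c * Z ^ β + (B Z / Z) * y ≤ B y ∧
      B y ≤ max 0 (sSup ((fun y => B y + b * y) '' Set.Icc (0:ℝ) M)) - b * y := by
  obtain ⟨K, hK⟩ := hBbdd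
  have hK0 : 0 ≤ K := le_trans (abs_nonneg _) (hK 0 ⟨le_refl _, hM.le⟩)
  have hMβ : 0 < M ^ β := Real.rpow_pos_of_pos hM β
  -- B Z / Z ≤ -b for all Z ≥ M
  have hZb : ∀ Z ≥ M, B Z / Z ≤ -b := by
    intro Z hZ
    refine ge_of_tendsto hlim ?_
    filter_upwards [eventually_ge_atTop Z] with y hy
    exact hmono hZ (le_trans hZ hy) hy
  -- bddAbove of the image set
  have hbdd : BddAbove ((fun y => B y + b * y) '' Set.Icc (0:ℝ) M) := by
    refine ⟨K + b * M, ?_⟩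
    rintro z ⟨x, hx, rfl⟩
    dsimp only
    have h1 : B x ≤ K := le_trans (le_abs_self _) (hK x hx)
    have h2 : b * x ≤ b * M := mul_le_mul_of_nonneg_left hx.2 hb.le
    linarith
  set s := sSup ((fun y => B y + b * y) '' Set.Icc (0:ℝ) M) with hs
  refine ⟨C + (K + 1) / M ^ β, by positivity, ?_⟩
  intro Z hZ y hy
  have hZ0 : 0 < Z := lt_of_lt_of_le hM hZ
  have hZβ : M ^ β ≤ Z ^ β := Real.rpow_le_rpow hM.le hZ hβ0
  have hZβ0 : 0 < Z ^ β := Real.rpow_pos_of_pos hZ0 β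
  have hBZ : B Z / Z ≤ -b := hZb Z hZ
  constructor
  · -- lower bound
    rcases le_or_gt M y with hyM | hyM
    · rcases le_or_gt y Z with hyZ | hyZ
      · -- M ≤ y ≤ Z
        have h1 : C * y ^ β ≤ C * Z ^ β :=
          mul_le_mul_of_nonneg_left (Real.rpow_le_rpow hy hyZ hβ0) hC.le
        have h2 : (B Z / Z) * y ≤ -b * y := mul_le_mul_of_nonneg_right hBZ hy
        have h3 : 0 ≤ (K + 1) / M ^ β * Z ^ β := by positivity
        have hrg : -(C + (K + 1) / M ^ β) * Z ^ β
            = -(C * Z ^ β) - (K + 1) / M ^ β * Z ^ β := by ring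
        have h5 : -(C * y ^ β) ≤ B y + b * y := by
          have := hBbar y hyM
          have := neg_abs_le (B y + b * y)
          linarith
        linarith [hrg.le]
      · -- y > Z
        have hy0 : 0 < y := lt_trans hZ0 hyZ
        have h1 : B Z / Z ≤ B y / y := hmono hZ (le_trans hZ hyZ.le) hyZ.le
        have h2 : (B Z / Z) * y ≤ (B y / y) * y := mul_le_mul_of_nonneg_right h1 hy
        have h3 : (B y / y) * y = B y := div_mul_cancel₀ _ hy0.ne'
        have h4 : 0 < (C + (K + 1) / M ^ β) * Z ^ β := by positivity
        linarith
    · -- 0 ≤ y < M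
      have h1 : -K ≤ B y := by
        have := hK y ⟨hy, hyM.le⟩
        have := neg_abs_le (B y)
        linarith
      have h2 : (B Z / Z) * y ≤ 0 :=
        mul_nonpos_of_nonpos_of_nonneg (hBZ.trans (by linarith)) hy
      have h3 : K + 1 ≤ (K + 1) / M ^ β * Z ^ β := by
        have : (K + 1) / M ^ β * M ^ β ≤ (K + 1) / M ^ β * Z ^ β :=
          mul_le_mul_of_nonneg_left hZβ (by positivity)
        rwa [div_mul_cancel₀ _ hMβ.ne'] at this
      have h4 : 0 ≤ C * Z ^ β := by positivity
      have hrg : -(C + (K + 1) / M ^ β) * Z ^ β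
          = -(C * Z ^ β) - (K + 1) / M ^ β * Z ^ β := by ring
      linarith [hrg.le]
  · -- upper bound
    rcases le_or_gt M y with hyM | hyM
    · have hy0 : 0 < y := lt_of_lt_of_le hM hyM
      have h1 : B y / y ≤ -b := hZb y hyM
      have h2 : (B y / y) * y ≤ -b * y := mul_le_mul_of_nonneg_right h1 hy
      rw [div_mul_cancel₀ _ hy0.ne'] at h2
      have : (0:ℝ) ≤ max 0 s := le_max_left _ _
      linarith
    · have hmem : B y + b * y ∈ (fun y => B y + b * y) '' Set.Icc (0:ℝ) M :=
        ⟨y, ⟨hy, hyM.le⟩, rfl⟩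
      have h1 : B y + b * y ≤ s := le_csSup hbdd hmem
      have h2 : s ≤ max 0 s := le_max_right _ _
      linarith
end

section
/- Let M > 0, b > 0, 0 ≤ β < 1, C > 0, and let B : [0,∞) → ℝ be continuous and bounded on [0,M]. Suppose y ↦ B(y)/y is monotonically decreasing on [M,∞) with lim_{y→∞} B(y)/y = −b, and that B̄(y) := B(y) + b y satisfies |B̄(y)| ≤ C y^β for all y ≥ M. Then, with m := max(0, −inf_{0 ≤ y ≤ M} (B(y) + b y)), there exists c > 0 such that for every Z ≥ M and every y ≥ 0: −m − b y ≤ B(y) ≤ c Z^β + (B(Z)/Z) y. -/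
open Filter Set

/-- If `B(y)/y` is monotonically decreasing on `[M,∞)` with limit `−b` and
`|B̄(y)| = |B(y)+by| ≤ C y^β` for `y ≥ M`, then with `m := max(0, −inf_{0≤y≤M}(B(y)+by))`
there exists `c > 0` such that for every `Z ≥ M` and every `y ≥ 0`,
`−m − b y ≤ B(y) ≤ c Z^β + (B(Z)/Z) y`. -/
theorem stmt18
    (M b β C : ℝ) (hM : 0 < M) (hb : 0 < b) (hβ0 : 0 ≤ β) (hβ1 : β < 1) (hC : 0 < C)
    (B : ℝ → ℝ) (hBcont : ContinuousOn B (Set.Ici 0))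
    (hBbdd : ∃ K : ℝ, ∀ y ∈ Set.Icc (0:ℝ) M, |B y| ≤ K)
    (hmono : AntitoneOn (fun y => B y / y) (Set.Ici M))
    (hlim : Tendsto (fun y => B y / y) atTop (nhds (-b)))
    (hBbar : ∀ y ≥ M, |B y + b * y| ≤ C * y ^ β) :
    ∃ c > (0:ℝ), ∀ Z ≥ M, ∀ y ≥ (0:ℝ),
      -(max 0 (-sInf ((fun y => B y + b * y) '' Set.Icc (0:ℝ) M))) - b * y ≤ B y ∧
      B y ≤ c * Z ^ β + (B Z / Z) * y := by
  obtain ⟨K, hK⟩ := hBbdd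
  have hK0 : 0 ≤ K := le_trans (abs_nonneg _) (hK 0 ⟨le_refl 0, hM.le⟩)
  have hMβ : 0 < M ^ β := Real.rpow_pos_of_pos hM β
  set m := max 0 (-sInf ((fun y => B y + b * y) '' Set.Icc (0:ℝ) M)) with hm
  have hge : ∀ z ≥ M, -b ≤ B z / z := by
    intro z hz
    exact le_of_tendsto hlim (eventually_atTop.2
      ⟨z, fun w hw => hmono hz (le_trans hz hw) hw⟩)
  have hlow : ∀ y ≥ (0:ℝ), -m - b * y ≤ B y := by
    intro y hy
    rcases le_total y M with hyM | hMy
    · have hmem : (B y + b * y) ∈ (fun y => B y + b * y) '' Set.Icc (0:ℝ) M :=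
        ⟨y, ⟨hy, hyM⟩, rfl⟩
      have hbdd : BddBelow ((fun y => B y + b * y) '' Set.Icc (0:ℝ) M) := by
        refine ⟨-K, ?_⟩
        rintro x ⟨w, hw, rfl⟩
        have h1 := (abs_le.1 (hK w hw)).1
        have hw0 : 0 ≤ b * w := mul_nonneg hb.le hw.1
        simp only []
        linarith
      have h1 := csInf_le hbdd hmem
      have h2 : -m ≤ sInf ((fun y => B y + b * y) '' Set.Icc (0:ℝ) M) :=
        neg_le.2 (le_max_right _ _)
      have hw0 : 0 ≤ b * y := mul_nonneg hb.le hy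
      linarith
    · have h := hge y hMy
      have hy0 : 0 < y := lt_of_lt_of_le hM hMy
      have h2 : -b * y ≤ (B y / y) * y := mul_le_mul_of_nonneg_right h hy0.le
      rw [div_mul_cancel₀ _ hy0.ne'] at h2
      have hm0 : 0 ≤ m := le_max_left _ _
      nlinarith
  refine ⟨C + (K + b * M + 1) / M ^ β, by positivity, ?_⟩
  intro Z hZ y hy
  refine ⟨hlow y hy, ?_⟩
  have hZ0 : 0 < Z := lt_of_lt_of_le hM hZ
  have hZβ : M ^ β ≤ Z ^ β := Real.rpow_le_rpow hM.le hZ hβ0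
  have hZβ0 : 0 ≤ Z ^ β := le_trans hMβ.le hZβ
  have hBZ : -b ≤ B Z / Z := hge Z hZ
  have hbZy : -b * y ≤ (B Z / Z) * y := mul_le_mul_of_nonneg_right hBZ hy
  have hdiv : 1 ≤ Z ^ β / M ^ β := (one_le_div hMβ).2 hZβ
  have hc1 : C * Z ^ β + (K + b * M + 1) ≤ (C + (K + b * M + 1) / M ^ β) * Z ^ β := by
    have ht0 : 0 ≤ K + b * M + 1 := by nlinarith [mul_pos hb hM]
    have h2 : (K + b * M + 1) * 1 ≤ (K + b * M + 1) * (Z ^ β / M ^ β) :=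
      mul_le_mul_of_nonneg_left hdiv ht0
    have h3 : (K + b * M + 1) * (Z ^ β / M ^ β) = (K + b * M + 1) / M ^ β * Z ^ β := by
      ring
    linarith
  have hCZ : 0 ≤ C * Z ^ β := mul_nonneg hC.le hZβ0
  rcases le_total y Z with hyZ | hZy
  · rcases le_total y M with hyM | hMy
    · have hBy : B y ≤ K := le_of_abs_le (hK y ⟨hy, hyM⟩)
      have hbM : b * y ≤ b * M := mul_le_mul_of_nonneg_left hyM hb.le
      linarith
    · have h1 : B y + b * y ≤ C * y ^ β := (abs_le.1 (hBbar y hMy)).2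
      have h2 : y ^ β ≤ Z ^ β := Real.rpow_le_rpow (by linarith) hyZ hβ0
      have h3 : C * y ^ β ≤ C * Z ^ β := mul_le_mul_of_nonneg_left h2 hC.le
      have ht0 : 0 ≤ K + b * M + 1 := by nlinarith [mul_pos hb hM]
      linarith
  · have hy0 : 0 < y := lt_of_lt_of_le hZ0 hZy
    have h := hmono hZ (le_trans hZ hZy) hZy
    have h2 : (B y / y) * y ≤ (B Z / Z) * y := mul_le_mul_of_nonneg_right h hy0.le
    rw [div_mul_cancel₀ _ hy0.ne'] at h2
    have ht0 : 0 ≤ K + b * M + 1 := by nlinarith [mul_pos hb hM]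
    linarith
end
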